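/- Let P be a poset and n a positive integer. Then P has dimension n if and only if n is the supremum of the dimensions of all finite (nonempty) subposets of P. -/

import Mathlib

universe u

/-- The order dimension of a poset: the least cardinal `κ` such that the partial
order is the intersection of `κ` linear orderings (each extending it). -/
noncomputable def orderDim (α : Type u) [PartialOrder α] : Cardinal.{u} :=
  sInf {κ : Cardinal.{u} | ∃ (ι : Type u) (r : ι → α → α → Prop),
    (∀ i, IsLinearOrder α (r i)) ∧
    (∀ x y : α, x ≤ y ↔ ∀ i, r i x y) ∧
    Cardinal.mk ι = κ}

/-!
Call a family of linear orders whose intersection is `≤` a realizer. By Szpilrajn's theorem the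
family of all linear extensions is one, so the infimum defining `orderDim` is attained, and
realizers pull back along order embeddings, so finite subposets have dimension at most
`orderDim P`. Conversely, if every finite subposet has a realizer by `n` linear orders, pick one
for each finite subset and take the limit along an ultrafilter on finite subsets that contains
every `{S | F ⊆ S}`: each limit relation is a linear order, and as `n` is finite a failure
`¬ x ≤ y` is witnessed by a single index on an ultrafilter-large set. So `orderDim P` is the
supremum of the dimensions of the finite subposets whenever that supremum is finite.
-/

open Cardinal Filter Function

structure IsRealizer {α ι : Type*} [PartialOrder α] (r : ι → α → α → Prop) : Prop where
  isLinearOrder : ∀ i, IsLinearOrder α (r i)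
  le_iff : ∀ x y : α, x ≤ y ↔ ∀ i, r i x y

section Realizer

variable {α β : Type u} [PartialOrder α] [PartialOrder β]

theorem exists_isLinearOrder_le_of_not_le {x y : α} (h : ¬x ≤ y) :
    ∃ s : α → α → Prop, IsLinearOrder α s ∧ (· ≤ ·) ≤ s ∧ s y x := by
  let r : α → α → Prop := fun a b => a ≤ b ∨ (a ≤ y ∧ x ≤ b)
  have : IsPartialOrder α r :=
    { refl := fun a => Or.inl le_rfl
      trans := by
        rintro a b c (hab | ⟨hay, hxb⟩) (hbc | ⟨hby, hxc⟩)
        · exact Or.inl (hab.trans hbc)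
        · exact Or.inr ⟨hab.trans hby, hxc⟩
        · exact Or.inr ⟨hay, hxb.trans hbc⟩
        · exact absurd (hxb.trans hby) h
      antisymm := by
        rintro a b (hab | ⟨hay, hxb⟩) (hba | ⟨hby, hxa⟩)
        · exact le_antisymm hab hba
        · exact absurd ((hxa.trans hab).trans hby) h
        · exact absurd ((hxb.trans hba).trans hay) h
        · exact absurd (hxb.trans hby) h }
  obtain ⟨s, hs, hrs⟩ := extend_partialOrder r
  exact ⟨s, hs, fun a b hab => hrs _ _ (Or.inl hab), hrs _ _ (Or.inr ⟨le_rfl, le_rfl⟩)⟩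

theorem isRealizer_linearExtensions :
    IsRealizer fun s : {s : α → α → Prop // IsLinearOrder α s ∧ (· ≤ ·) ≤ s} => s.1 where
  isLinearOrder s := s.2.1
  le_iff x y := by
    refine ⟨fun hxy s => s.2.2 x y hxy, fun hall => ?_⟩
    by_contra hxy
    obtain ⟨s, hs, hle, hyx⟩ := exists_isLinearOrder_le_of_not_le hxy
    exact hxy (antisymm (r := s) (hall ⟨s, hs, hle⟩) hyx).le

theorem IsRealizer.comp_surjective {ι κ : Type*} {r : ι → α → α → Prop} (h : IsRealizer r)
    {g : κ → ι} (hg : Surjective g) : IsRealizer (r ∘ g) where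
  isLinearOrder k := h.isLinearOrder (g k)
  le_iff x y := (h.le_iff x y).trans hg.forall

theorem IsRealizer.comap {ι : Type*} {r : ι → α → α → Prop} (h : IsRealizer r) (f : β ↪o α) :
    IsRealizer fun i => f ⁻¹'o r i where
  isLinearOrder i :=
    have := h.isLinearOrder i
    (RelEmbedding.preimage f.toEmbedding (r i)).isLinearOrder
  le_iff x y := f.le_iff_le.symm.trans (h.le_iff (f x) (f y))

theorem IsRealizer.subsingleton {ι : Type*} [IsEmpty ι] {r : ι → α → α → Prop}
    (h : IsRealizer r) : Subsingleton α :=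
  ⟨fun x y => le_antisymm ((h.le_iff x y).2 isEmptyElim) ((h.le_iff y x).2 isEmptyElim)⟩

theorem isRealizer_const_le {ι : Type*} [Subsingleton α] :
    IsRealizer fun _ : ι => (· ≤ · : α → α → Prop) where
  isLinearOrder _ := { total a b := Or.inl (Subsingleton.elim a b).le }
  le_iff x y := ⟨fun h _ => h, fun _ => (Subsingleton.elim x y).le⟩

end Realizer

section OrderDim

variable {α β : Type u} [PartialOrder α] [PartialOrder β]

theorem orderDim_le_mk {ι : Type u} {r : ι → α → α → Prop} (h : IsRealizer r) :
    orderDim α ≤ #ι :=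
  csInf_le' ⟨ι, r, h.isLinearOrder, h.le_iff, rfl⟩

theorem exists_isRealizer_mk_eq_orderDim (α : Type u) [PartialOrder α] :
    ∃ (ι : Type u) (r : ι → α → α → Prop), IsRealizer r ∧ #ι = orderDim α := by
  obtain ⟨ι, r, hlin, hle, hι⟩ : orderDim α ∈ _ := csInf_mem
    ⟨_, _, _, isRealizer_linearExtensions.isLinearOrder, isRealizer_linearExtensions.le_iff, rfl⟩
  exact ⟨ι, r, ⟨hlin, hle⟩, hι⟩

theorem orderDim_le_of_orderEmbedding (f : β ↪o α) : orderDim β ≤ orderDim α := by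
  obtain ⟨ι, r, hr, hι⟩ := exists_isRealizer_mk_eq_orderDim α
  exact hι ▸ orderDim_le_mk (hr.comap f)

theorem orderDim_eq_zero [Subsingleton α] : orderDim α = 0 :=
  le_antisymm (by simpa using orderDim_le_mk (isRealizer_const_le (ι := PEmpty))) zero_le

theorem orderDim_le_of_isRealizer_fin {n : ℕ} {r : Fin n → α → α → Prop} (h : IsRealizer r) :
    orderDim α ≤ n := by
  simpa using orderDim_le_mk (h.comp_surjective ULift.down_surjective)

theorem exists_isRealizer_fin_of_orderDim_le {n : ℕ} (h : orderDim α ≤ n) :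
    ∃ r : Fin n → α → α → Prop, IsRealizer r := by
  obtain ⟨ι, r, hr, hι⟩ := exists_isRealizer_mk_eq_orderDim α
  rcases isEmpty_or_nonempty ι with _ | _
  · have := hr.subsingleton
    exact ⟨_, isRealizer_const_le⟩
  · obtain ⟨e⟩ : Nonempty (ι ↪ Fin n) := by
      rw [← lift_mk_le', mk_fin, lift_natCast, lift_uzero]
      exact hι.trans_le h
    exact ⟨_, hr.comp_surjective (invFun_surjective e.injective)⟩

end OrderDim

section Ultralimit

variable {α : Type*}

def Finset.liftRel (S : Finset α) (r : S → S → Prop) (x y : α) : Prop :=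
  ∃ (hx : x ∈ S) (hy : y ∈ S), r ⟨x, hx⟩ ⟨y, hy⟩

theorem isLinearOrder_ultralimit_liftRel (U : Ultrafilter (Finset α))
    (hU : ∀ x, ∀ᶠ S : Finset α in U, x ∈ S) (r : ∀ S : Finset α, S → S → Prop)
    (hr : ∀ S : Finset α, IsLinearOrder S (r S)) :
    IsLinearOrder α fun x y => ∀ᶠ S : Finset α in U, S.liftRel (r S) x y where
  refl x := (hU x).mono fun S hx => ⟨hx, hx, have := hr S; refl _⟩
  trans x y z hxy hyz := (hxy.and hyz).mono fun S ⟨⟨hx, _, h₁⟩, ⟨_, hz, h₂⟩⟩ =>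
    ⟨hx, hz, have := hr S; _root_.trans h₁ h₂⟩
  antisymm x y hxy hyx := by
    obtain ⟨S, ⟨_, _, h₁⟩, ⟨_, _, h₂⟩⟩ := (hxy.and hyx).exists
    have := hr S
    exact congrArg Subtype.val (antisymm h₁ h₂)
  total x y := U.eventually_or.1 <| ((hU x).and (hU y)).mono fun S ⟨hx, hy⟩ => by
    have := hr S
    exact (total_of (r S) ⟨x, hx⟩ ⟨y, hy⟩).imp (⟨hx, hy, ·⟩) (⟨hy, hx, ·⟩)

variable [PartialOrder α]

theorem isRealizer_ultralimit_liftRel {ι : Type*} [Finite ι] (U : Ultrafilter (Finset α))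
    (hU : ∀ x, ∀ᶠ S : Finset α in U, x ∈ S) (r : ∀ S : Finset α, ι → S → S → Prop)
    (hr : ∀ S : Finset α, IsRealizer (r S)) :
    IsRealizer fun i x y => ∀ᶠ S : Finset α in U, S.liftRel (r S i) x y where
  isLinearOrder i := isLinearOrder_ultralimit_liftRel U hU _ fun S => (hr S).isLinearOrder i
  le_iff x y := by
    refine ⟨fun hxy i => ((hU x).and (hU y)).mono fun S ⟨hx, hy⟩ =>
      ⟨hx, hy, ((hr S).le_iff ⟨x, hx⟩ ⟨y, hy⟩).1 hxy i⟩, fun hall => ?_⟩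
    by_contra hxy
    have : ∀ᶠ S : Finset α in U, ∃ i, ¬S.liftRel (r S i) x y :=
      ((hU x).and (hU y)).mono fun S ⟨hx, hy⟩ => by
        obtain ⟨i, hi⟩ := not_forall.1 (((hr S).le_iff ⟨x, hx⟩ ⟨y, hy⟩).not.1 hxy)
        exact ⟨i, fun ⟨_, _, h⟩ => hi h⟩
    obtain ⟨i, hi⟩ := U.eventually_exists_iff.1 this
    exact (U.eventually_not.1 hi) (hall i)

end Ultralimit

section FiniteSubposets

variable {α : Type u} [PartialOrder α]

theorem orderDim_le_of_forall_finite {n : ℕ}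
    (h : ∀ S : Set α, S.Finite → orderDim S ≤ n) : orderDim α ≤ n := by
  choose r hr using fun S : Finset α => exists_isRealizer_fin_of_orderDim_le (h S S.finite_toSet)
  let U := Ultrafilter.of (atTop : Filter (Finset α))
  have hU : ∀ x, ∀ᶠ S : Finset α in U, x ∈ S := fun x =>
    Ultrafilter.of_le _ <| (eventually_ge_atTop {x}).mono fun _ => Finset.singleton_subset_iff.1
  exact orderDim_le_of_isRealizer_fin (isRealizer_ultralimit_liftRel U hU r hr)

def finiteSubposetDims (α : Type u) [PartialOrder α] : Set Cardinal.{u} :=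
  {c | ∃ S : Set α, S.Finite ∧ S.Nonempty ∧ orderDim S = c}

theorem le_orderDim_of_mem_finiteSubposetDims {c : Cardinal.{u}}
    (hc : c ∈ finiteSubposetDims α) : c ≤ orderDim α := by
  obtain ⟨S, -, -, rfl⟩ := hc
  exact orderDim_le_of_orderEmbedding (OrderEmbedding.subtype _)

theorem sSup_finiteSubposetDims_le : sSup (finiteSubposetDims α) ≤ orderDim α :=
  csSup_le' fun _ => le_orderDim_of_mem_finiteSubposetDims

theorem orderDim_le_of_sSup_finiteSubposetDims_le {n : ℕ}
    (h : sSup (finiteSubposetDims α) ≤ n) : orderDim α ≤ n := by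
  have hbdd : BddAbove (finiteSubposetDims α) :=
    ⟨orderDim α, fun _ => le_orderDim_of_mem_finiteSubposetDims⟩
  refine orderDim_le_of_forall_finite fun S hS => ?_
  rcases S.eq_empty_or_nonempty with rfl | hne
  · simp [orderDim_eq_zero]
  · exact (le_csSup hbdd ⟨S, hS, hne, rfl⟩).trans h

theorem orderDim_eq_sSup_finiteSubposetDims (h : sSup (finiteSubposetDims α) < ℵ₀) :
    orderDim α = sSup (finiteSubposetDims α) := by
  obtain ⟨m, hm⟩ := lt_aleph0.1 h
  exact le_antisymm (hm ▸ orderDim_le_of_sSup_finiteSubposetDims_le hm.le)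
    sSup_finiteSubposetDims_le

end FiniteSubposets

theorem stmt18_general (P : Type u) [PartialOrder P] (n : ℕ) :
    orderDim P = n ↔
      (n : Cardinal) =
        sSup {c : Cardinal | ∃ S : Set P, S.Finite ∧ S.Nonempty ∧ orderDim ↥S = c} := by
  change _ ↔ _ = sSup (finiteSubposetDims P)
  constructor
  · intro h
    rw [← h]
    exact orderDim_eq_sSup_finiteSubposetDims
      ((h ▸ sSup_finiteSubposetDims_le).trans_lt natCast_lt_aleph0)
  · intro h
    rw [h]
    exact orderDim_eq_sSup_finiteSubposetDims (h ▸ natCast_lt_aleph0)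

theorem stmt18 (P : Type u) [PartialOrder P] [Nonempty P] (n : ℕ) (hn : 0 < n) :
    orderDim P = n ↔
      (n : Cardinal) =
        sSup {c : Cardinal | ∃ S : Set P, S.Finite ∧ S.Nonempty ∧ orderDim ↥S = c} :=
  stmt18_general P n
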